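/- arXiv:2604.25288 — 6 statements merged into one kernel-verified Lean document; each statement's English description precedes it below -/
import Mathlib

section
/- Let a and b be nonzero rational numbers. Then the set of primes ℓ such that the pair (a,b) is not isotropic over ℚ_ℓ is finite. -/
/-- The pair `(a, b)` of nonzero rationals is *isotropic* over a field `F`
if `z² = a·x² + b·y²` has a nonzero solution in `F³`. -/
def RatIsotropic (F : Type*) [Field F] (a b : ℚ) : Prop :=
  ∃ x y z : F, (x, y, z) ≠ (0, 0, 0) ∧ z ^ 2 = (a : F) * x ^ 2 + (b : F) * y ^ 2

/-- `ℓ` is a *bad prime* for `(a, b)` if `ℓ` is prime and `(a, b)` is not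
isotropic over `ℚ_ℓ`. -/
def BadPrime (a b : ℚ) (ℓ : ℕ) : Prop :=
  ∃ h : ℓ.Prime, haveI : Fact ℓ.Prime := ⟨h⟩; ¬ RatIsotropic ℚ_[ℓ] a b

/-!
Scaling `a` and `b` by the squares of their denominators replaces them by integers `m`, `n`, and
for an odd prime `ℓ` not dividing `m n` these are `ℓ`-adic units. Over `𝔽_ℓ` the equation
`z² = m x² + n` has a solution, since both sides take `(ℓ + 1) / 2` values. Hensel's lemma lifts
it to `ℤ_ℓ`: if `z ≢ 0`, then `m x² + n` is a unit with square residue, hence a square; if `z ≡ 0`,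
then `-m n ≡ (m x)²` is a square `t²`, and `(t, m, 0)` is a solution.
-/

open Polynomial

theorem FiniteField.exists_sq_eq_mul_sq_add {K : Type*} [Field K] [Fintype K]
    (hK : ringChar K ≠ 2) {A : K} (hA : A ≠ 0) (B : K) : ∃ x z : K, z ^ 2 = A * x ^ 2 + B := by
  have hf : (C A * X ^ 2 + C B).degree = 2 := by compute_degree!
  have hg : (-X ^ 2 : K[X]).degree = 2 := by compute_degree!
  obtain ⟨x, z, h⟩ := exists_root_sum_quadratic hf hg (odd_card_of_char_ne_two hK)
  refine ⟨x, z, ?_⟩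
  simp only [eval_add, eval_mul, eval_C, eval_pow, eval_X, eval_neg] at h
  linear_combination -h

section Henselian

variable {R K : Type*} [CommRing R] [Field K] (φ : R →+* K)

theorem Ideal.Quotient.isUnit_mk_ker_of_map_ne_zero (hφ : Function.Surjective φ) {x : R}
    (hx : φ x ≠ 0) : IsUnit (Ideal.Quotient.mk (RingHom.ker φ) x) := by
  have := RingHom.ker_isMaximal_of_surjective φ hφ
  let := Ideal.Quotient.field (RingHom.ker φ)
  refine isUnit_iff_ne_zero.2 ?_
  rwa [Ne, Ideal.Quotient.eq_zero_iff_mem, RingHom.mem_ker]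

theorem HenselianRing.isSquare_of_map_eq_sq [HenselianRing R (RingHom.ker φ)]
    (hφ : Function.Surjective φ) (h2 : (2 : K) ≠ 0) {u : R} {s : K} (hs : s ≠ 0)
    (hu : φ u = s ^ 2) : IsSquare u := by
  obtain ⟨a₀, rfl⟩ := hφ s
  obtain ⟨t, ht, -⟩ := HenselianRing.is_henselian (X ^ 2 - C u)
    (monic_X_pow_sub_C u two_ne_zero) a₀ (by simp [hu])
    (Ideal.Quotient.isUnit_mk_ker_of_map_ne_zero φ hφ
      (by simpa [one_add_one_eq_two, map_ofNat] using mul_ne_zero h2 hs))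
  refine ⟨t, ?_⟩
  simp only [IsRoot, eval_sub, eval_pow, eval_X, eval_C] at ht
  linear_combination -ht

theorem HenselianRing.exists_sq_eq_mul_sq_add_mul_sq [HenselianRing R (RingHom.ker φ)]
    [Fintype K] (hφ : Function.Surjective φ) (hK : ringChar K ≠ 2) {A B : R} (hA : φ A ≠ 0)
    (hB : φ B ≠ 0) : ∃ x y z : R, φ y ≠ 0 ∧ z ^ 2 = A * x ^ 2 + B * y ^ 2 := by
  have h2 : (2 : K) ≠ 0 := Ring.two_ne_zero hK
  obtain ⟨x₀, z₀, h₀⟩ := FiniteField.exists_sq_eq_mul_sq_add hK hA (φ B)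
  obtain ⟨x, rfl⟩ := hφ x₀
  by_cases hz₀ : z₀ = 0
  · have hx : φ x ≠ 0 := by rintro hx; apply hB; simpa [hx, hz₀] using h₀.symm
    obtain ⟨t, ht⟩ := isSquare_of_map_eq_sq φ hφ h2 (u := -(A * B)) (mul_ne_zero hA hx)
      (by rw [map_neg, map_mul]; subst hz₀; linear_combination (φ A) * h₀)
    exact ⟨t, A, 0, hA, by linear_combination A * ht⟩
  · obtain ⟨t, ht⟩ := isSquare_of_map_eq_sq φ hφ h2 (u := A * x ^ 2 + B) hz₀ (by simp [h₀])
    exact ⟨x, 1, t, by simp, by linear_combination -ht⟩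

end Henselian

instance PadicInt.henselianRing_ker_toZMod {p : ℕ} [Fact p.Prime] :
    HenselianRing ℤ_[p] (RingHom.ker (PadicInt.toZMod : ℤ_[p] →+* ZMod p)) := by
  rw [PadicInt.ker_toZMod]
  infer_instance

theorem Padic.ratIsotropic_intCast {p : ℕ} [Fact p.Prime] (hp : p ≠ 2) {m n : ℤ}
    (hm : ¬(p : ℤ) ∣ m) (hn : ¬(p : ℤ) ∣ n) : RatIsotropic ℚ_[p] m n := by
  have toZMod_ne_zero {k : ℤ} (hk : ¬(p : ℤ) ∣ k) : PadicInt.toZMod (k : ℤ_[p]) ≠ 0 := by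
    rwa [map_intCast, Ne, ZMod.intCast_zmod_eq_zero_iff_dvd]
  obtain ⟨x, y, z, hy, h⟩ := HenselianRing.exists_sq_eq_mul_sq_add_mul_sq PadicInt.toZMod
    (ZMod.ringHom_surjective _) (by rwa [ZMod.ringChar_zmod_n]) (toZMod_ne_zero hm)
    (toZMod_ne_zero hn)
  refine ⟨x, y, z, fun h0 => hy ?_, ?_⟩
  · simp only [Prod.mk.injEq, PadicInt.coe_eq_zero] at h0
    simp [h0.2.1]
  · exact_mod_cast congrArg ((↑) : ℤ_[p] → ℚ_[p]) h

theorem ratIsotropic_of_mul_sq {F : Type*} [Field F] [CharZero F] {a b c d : ℚ} (hc : c ≠ 0)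
    (hd : d ≠ 0) (h : RatIsotropic F (a * c ^ 2) (b * d ^ 2)) : RatIsotropic F a b := by
  obtain ⟨x, y, z, hxyz, h⟩ := h
  refine ⟨c * x, d * y, z, ?_, ?_⟩
  · simpa [hc, hd] using hxyz
  · push_cast at h
    linear_combination h

/-- For nonzero rationals `a, b`, the set of primes `ℓ` such that `(a,b)` is
not isotropic over `ℚ_ℓ` is finite. -/
theorem finitely_many_anisotropic_places (a b : ℚ) (ha : a ≠ 0) (hb : b ≠ 0) :
    {ℓ : ℕ | BadPrime a b ℓ}.Finite := by
  have hsq (q : ℚ) : ((q.num * q.den : ℤ) : ℚ) = q * (q.den : ℚ) ^ 2 := by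
    push_cast; rw [← Rat.mul_den_eq_num]; ring
  set N : ℤ := 2 * (a.num * a.den) * (b.num * b.den)
  have hN : N ≠ 0 := by simp [N, ha, hb]
  refine N.natAbs.primeFactors.finite_toSet.subset fun ℓ ⟨hℓ, hbad⟩ => ?_
  have := Fact.mk hℓ
  refine Nat.mem_primeFactors.2 ⟨hℓ, ?_, Int.natAbs_ne_zero.2 hN⟩
  by_contra hdvd
  have hℓ' := Nat.prime_iff_prime_int.1 hℓ
  rw [← Int.natCast_dvd, hℓ'.dvd_mul, hℓ'.dvd_mul, not_or, not_or] at hdvd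
  obtain ⟨⟨h2, hm⟩, hn⟩ := hdvd
  refine hbad (ratIsotropic_of_mul_sq (c := a.den) (d := b.den) (by simp) (by simp) ?_)
  rw [← hsq, ← hsq]
  exact Padic.ratIsotropic_intCast (by rintro rfl; exact h2 dvd_rfl) hm hn
end

section
/- Let p and q be distinct odd primes. Then the pair (p,q) is isotropic over ℚ_p (i.e. there exists (x,y,z) ∈ ℚ_p³ with (x,y,z) ≠ (0,0,0) and z² = p·x² + q·y²) if and only if the Legendre symbol (q/p) equals 1. -/
/-!
A nonzero square in `ℚ_[p]` has even valuation and `p` times a nonzero square has odd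
valuation, so their norms never agree. Hence on a solution one has `y ≠ 0`, and
`q = w² - p u²` with `w = z / y`, `u = x / y`; since `q` is a unit, the ultrametric
equality forces `‖w‖ = 1` and `‖p u²‖ < 1`, so `q ≡ w² (mod p)`. Conversely, if `q` is a
square mod `p`, Hensel's lemma (with `p` odd, so the root of `X² - q` is simple) makes `q`
a square in `ℤ_[p]`, giving the solution `(0, 1, √q)`.
-/

namespace Padic

variable {p : ℕ} [Fact p.Prime]

theorem eq_zero_of_norm_sq_eq_norm_p_mul_sq {a b : ℚ_[p]}
    (h : ‖a ^ 2‖ = ‖(p : ℚ_[p]) * b ^ 2‖) : b = 0 := by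
  by_contra hb
  have hp0 : (p : ℚ_[p]) ≠ 0 := Nat.cast_ne_zero.mpr (Fact.out : p.Prime).ne_zero
  have ha : a ≠ 0 := by
    rintro rfl
    simp [hb, (Fact.out : p.Prime).ne_zero] at h
  have hp1 : (1 : ℝ) < p := mod_cast (Fact.out : p.Prime).one_lt
  rw [norm_eq_zpow_neg_valuation (pow_ne_zero 2 ha),
    norm_eq_zpow_neg_valuation (mul_ne_zero hp0 (pow_ne_zero 2 hb)),
    zpow_right_inj₀ (by positivity) hp1.ne', valuation_mul hp0 (pow_ne_zero 2 hb),
    valuation_pow, valuation_pow, valuation_p] at h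
  omega

end Padic

namespace PadicInt

variable {p : ℕ} [Fact p.Prime]

theorem toZMod_eq_zero_iff {x : ℤ_[p]} : toZMod x = 0 ↔ ‖x‖ < 1 := by
  rw [← RingHom.mem_ker, ker_toZMod, IsLocalRing.mem_maximalIdeal, mem_nonunits]

theorem norm_eq_one_iff_toZMod_ne_zero {x : ℤ_[p]} : ‖x‖ = 1 ↔ toZMod x ≠ 0 := by
  rw [Ne, toZMod_eq_zero_iff, not_lt, (norm_le_one x).ge_iff_eq', eq_comm]

theorem isSquare_toZMod_of_eq_sq_sub_p_mul_sq {c : ℤ_[p]} (hc : ‖c‖ = 1) {w u : ℚ_[p]}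
    (h : (c : ℚ_[p]) = w ^ 2 - p * u ^ 2) : IsSquare (toZMod c) := by
  have hc' : ‖(c : ℚ_[p])‖ = 1 := hc
  have hw : w ^ 2 = c + p * u ^ 2 := by rw [h]; ring
  have hpu_ne : ‖(p : ℚ_[p]) * u ^ 2‖ ≠ ‖(c : ℚ_[p])‖ := by
    intro h1
    rw [hc', ← norm_one (α := ℚ_[p]), ← one_pow 2] at h1
    have hu := Padic.eq_zero_of_norm_sq_eq_norm_p_mul_sq h1.symm
    simp [hu] at h1
  have hmax : ‖w ^ 2‖ = max 1 ‖(p : ℚ_[p]) * u ^ 2‖ := by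
    rw [hw, Padic.add_eq_max_of_ne hpu_ne.symm, hc']
  have hpu : ‖(p : ℚ_[p]) * u ^ 2‖ < 1 := by
    rcases lt_or_gt_of_ne (hc' ▸ hpu_ne) with hlt | hgt
    · exact hlt
    · rw [max_eq_right hgt.le] at hmax
      have hu := Padic.eq_zero_of_norm_sq_eq_norm_p_mul_sq hmax
      norm_num [hu] at hgt
  have hw1 : ‖w‖ ≤ 1 := by
    rw [max_eq_left hpu.le, norm_pow] at hmax
    nlinarith [norm_nonneg w]
  obtain ⟨W, rfl⟩ : ∃ W : ℤ_[p], (W : ℚ_[p]) = w := ⟨⟨w, hw1⟩, rfl⟩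
  refine ⟨toZMod W, ?_⟩
  rw [← map_mul, ← sub_eq_zero, ← map_sub, toZMod_eq_zero_iff, norm_def]
  push_cast
  rwa [show (c : ℚ_[p]) - W * W = -(p * u ^ 2) by rw [h]; ring, norm_neg]

theorem isSquare_of_isSquare_toZMod (hp : p ≠ 2) {c : ℤ_[p]} (hc : toZMod c ≠ 0)
    (hsq : IsSquare (toZMod c)) : IsSquare c := by
  obtain ⟨r, hr⟩ := hsq
  obtain ⟨a, rfl⟩ := ZMod.ringHom_surjective toZMod r
  set F : Polynomial ℤ_[p] := .X ^ 2 - .C c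
  have hF : ‖F.aeval a‖ < 1 := by
    rw [← toZMod_eq_zero_iff]
    simp [F, hr, sq]
  have hF' : ‖F.derivative.aeval a‖ = 1 := by
    have h2 : (2 : ZMod p) ≠ 0 := Ring.two_ne_zero (by rwa [ZMod.ringChar_zmod_n])
    have ha : toZMod a ≠ 0 := by
      rintro h0
      rw [h0, zero_mul] at hr
      exact hc hr
    rw [norm_eq_one_iff_toZMod_ne_zero]
    simpa [F, ha, one_add_one_eq_two, map_ofNat] using h2
  obtain ⟨z, hz, -⟩ := hensels_lemma (F := F) (a := a) (by rwa [hF', one_pow])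
  exact ⟨z, by simpa [F, sub_eq_zero, sq, eq_comm] using hz⟩

end PadicInt

theorem isotropic_at_p_iff_legendre_general (p q : ℕ) [Fact p.Prime] [Fact q.Prime]
    (hp : p ≠ 2) (hpq : p ≠ q) :
    (∃ x y z : ℚ_[p], (x, y, z) ≠ (0, 0, 0) ∧
        z ^ 2 = (p : ℚ_[p]) * x ^ 2 + (q : ℚ_[p]) * y ^ 2)
      ↔ legendreSym p (q : ℤ) = 1 := by
  have hcop : p.Coprime q := (Nat.coprime_primes Fact.out Fact.out).mpr hpq
  have hq0 : (q : ZMod p) ≠ 0 := by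
    rwa [Ne, ZMod.natCast_eq_zero_iff, ← (Fact.out : p.Prime).coprime_iff_not_dvd]
  have hq1 : ‖(q : ℤ_[p])‖ = 1 := PadicInt.norm_natCast_eq_one_iff.mpr hcop
  rw [legendreSym.eq_one_iff' p hq0]
  constructor
  · rintro ⟨x, y, z, hne, h⟩
    have hy : y ≠ 0 := by
      rintro rfl
      have hx : x = 0 := Padic.eq_zero_of_norm_sq_eq_norm_p_mul_sq (a := z) (by simp [h])
      have hz : z = 0 := by simpa [hx] using h
      exact hne (by simp [hx, hz])
    have h' : ((q : ℤ_[p]) : ℚ_[p]) = (z / y) ^ 2 - p * (x / y) ^ 2 := by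
      field_simp
      push_cast
      linear_combination -h
    simpa using PadicInt.isSquare_toZMod_of_eq_sq_sub_p_mul_sq hq1 h'
  · intro hsq
    obtain ⟨r, hr⟩ := PadicInt.isSquare_of_isSquare_toZMod hp (c := q) (by simpa using hq0)
      (by simpa using hsq)
    refine ⟨0, 1, r, by simp, ?_⟩
    simpa [sq] using congrArg ((↑) : ℤ_[p] → ℚ_[p]) hr.symm

/-- For distinct odd primes `p`, `q`, the pair `(p, q)` is isotropic over
`ℚ_p` if and only if the Legendre symbol `(q/p)` equals `1`. -/
theorem isotropic_at_p_iff_legendre (p q : ℕ) [Fact p.Prime] [Fact q.Prime]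
    (hp : p ≠ 2) (hq : q ≠ 2) (hpq : p ≠ q) :
    (∃ x y z : ℚ_[p], (x, y, z) ≠ (0, 0, 0) ∧
        z ^ 2 = (p : ℚ_[p]) * x ^ 2 + (q : ℚ_[p]) * y ^ 2)
      ↔ legendreSym p (q : ℤ) = 1 :=
  isotropic_at_p_iff_legendre_general p q hp hpq
end

section
/- Let u and v be odd integers. Then the pair (u,v) is isotropic over ℚ₂ (i.e. there exists (x,y,z) ∈ ℚ₂³ with (x,y,z) ≠ (0,0,0) and z² = u·x² + v·y²) if and only if u ≡ 1 (mod 4) or v ≡ 1 (mod 4). Equivalently, the 2-adic Hilbert symbol of two odd integers u, v equals (−1)^{((u−1)/2)·((v−1)/2)}. -/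
/-! If `u ≡ 1 (mod 4)`, then `u` or `u + 4v` is `≡ 1 (mod 8)`, hence a square in `ℚ₂` by Hensel's
lemma, which gives the solution `(1, 0, √u)` or `(1, 2, √(u + 4v))`. If `u ≡ v ≡ 3 (mod 4)`, scale
a solution so that its coordinates are 2-adic integers, one of them equal to `1`; modulo 4 the
equation becomes `x² + y² + z² ≡ 0`, impossible with one coordinate odd since squares are `0` or
`1` mod 4. -/

def IsIsotropic (R : Type*) [CommRing R] (a b : R) : Prop :=
  ∃ x y z : R, (x, y, z) ≠ (0, 0, 0) ∧ z ^ 2 = a * x ^ 2 + b * y ^ 2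

section
variable {R : Type*} [CommRing R] {a b : R}

theorem IsIsotropic.symm (h : IsIsotropic R a b) : IsIsotropic R b a := by
  obtain ⟨x, y, z, hne, heq⟩ := h
  refine ⟨y, x, z, ?_, by rw [heq]; ring⟩
  contrapose! hne
  simp_all

theorem isIsotropic_of_isSquare_add_mul_sq [Nontrivial R] (t : R) (h : IsSquare (a + b * t ^ 2)) :
    IsIsotropic R a b := by
  obtain ⟨z, hz⟩ := h
  exact ⟨1, t, z, by simp, by rw [sq, ← hz]; ring⟩

end

theorem PadicInt.isSquare_of_norm_sub_one_lt {p : ℕ} [Fact p.Prime] {c : ℤ_[p]}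
    (h : ‖c - 1‖ < ‖(2 : ℤ_[p])‖ ^ 2) : IsSquare c := by
  have hnorm : ‖(Polynomial.X ^ 2 - Polynomial.C c).aeval (1 : ℤ_[p])‖ <
      ‖(Polynomial.X ^ 2 - Polynomial.C c).derivative.aeval (1 : ℤ_[p])‖ ^ 2 := by
    simpa [norm_sub_rev, one_add_one_eq_two] using h
  obtain ⟨z, hz, -⟩ := hensels_lemma hnorm
  exact ⟨z, by simpa [sub_eq_zero, sq, eq_comm] using hz⟩

theorem PadicInt.isSquare_intCast_of_emod_eight_eq_one {c : ℤ} (hc : c % 8 = 1) :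
    IsSquare (c : ℤ_[2]) := by
  refine isSquare_of_norm_sub_one_lt ?_
  have h8 := (norm_int_le_pow_iff_dvd (p := 2) (k := c - 1) (n := 3)).mpr (by norm_num; omega)
  have h2 : ‖(2 : ℤ_[2])‖ = 2⁻¹ := by exact_mod_cast norm_p (p := 2)
  push_cast at h8
  rw [h2]
  exact h8.trans_lt (by norm_num)

theorem isIsotropic_padic_two_of_emod_four_eq_one {u v : ℤ} (hu : u % 4 = 1) (hv : Odd v) :
    IsIsotropic ℚ_[2] u v := by
  obtain ⟨t, ht⟩ : ∃ t : ℤ, (u + v * t ^ 2) % 8 = 1 := by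
    obtain ⟨k, rfl⟩ := hv
    rcases (by omega : u % 8 = 1 ∨ u % 8 = 5) with h | h
    · exact ⟨0, by omega⟩
    · exact ⟨2, by omega⟩
  refine isIsotropic_of_isSquare_add_mul_sq (t : ℚ_[2]) ?_
  exact_mod_cast (PadicInt.isSquare_intCast_of_emod_eight_eq_one ht).map PadicInt.Coe.ringHom

theorem PadicInt.exists_eq_one_of_isIsotropic {p : ℕ} [Fact p.Prime] {a b : ℤ_[p]}
    (h : IsIsotropic ℚ_[p] a b) :
    ∃ x y z : ℤ_[p], (x = 1 ∨ y = 1 ∨ z = 1) ∧ z ^ 2 = a * x ^ 2 + b * y ^ 2 := by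
  classical
  obtain ⟨x, y, z, hne, heq⟩ := h
  obtain ⟨w, hw, hmax⟩ := Finset.exists_max_image {x, y, z} (‖·‖) (by simp)
  simp only [Finset.mem_insert, Finset.mem_singleton, forall_eq_or_imp, forall_eq] at hw hmax
  obtain ⟨hx, hy, hz⟩ := hmax
  have hw0 : w ≠ 0 := by
    rintro rfl
    simp_all
  have hlift : ∀ t : ℚ_[p], ‖t‖ ≤ ‖w‖ → ∃ T : ℤ_[p], (T : ℚ_[p]) = t / w := fun t ht =>
    ⟨⟨t / w, by rw [norm_div]; exact div_le_one_of_le₀ ht (norm_nonneg w)⟩, rfl⟩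
  obtain ⟨X, hX⟩ := hlift x hx
  obtain ⟨Y, hY⟩ := hlift y hy
  obtain ⟨Z, hZ⟩ := hlift z hz
  have hone : ∀ T : ℤ_[p], (T : ℚ_[p]) = w / w → T = 1 := fun T hT =>
    PadicInt.ext (by rw [hT, div_self hw0, PadicInt.coe_one])
  refine ⟨X, Y, Z, ?_, ?_⟩
  · rcases hw with rfl | rfl | rfl
    exacts [Or.inl (hone X hX), Or.inr (Or.inl (hone Y hY)), Or.inr (Or.inr (hone Z hZ))]
  · apply PadicInt.ext
    push_cast
    rw [hX, hY, hZ]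
    field_simp
    linear_combination heq

theorem ZMod.sq_add_sq_add_sq_ne_zero_of_eq_one (x y z : ZMod 4) (h : x = 1 ∨ y = 1 ∨ z = 1) :
    x ^ 2 + y ^ 2 + z ^ 2 ≠ 0 := by
  revert x y z; decide

theorem not_isIsotropic_padic_two_of_emod_four_eq_three {u v : ℤ} (hu : u % 4 = 3)
    (hv : v % 4 = 3) : ¬ IsIsotropic ℚ_[2] u v := by
  intro h
  obtain ⟨x, y, z, hone, heq⟩ :=
    PadicInt.exists_eq_one_of_isIsotropic (a := u) (b := v) (by exact_mod_cast h)
  have hneg : ∀ n : ℤ, n % 4 = 3 → (n : ZMod 4) = -1 := fun n hn => by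
    rw [(ZMod.intCast_eq_intCast_iff' n (-1) 4).mpr (by omega), Int.cast_neg, Int.cast_one]
  set φ := PadicInt.toZModPow (p := 2) 2
  have hred := congrArg φ heq
  simp only [map_add, map_mul, map_pow, map_intCast, hneg u hu, hneg v hv] at hred
  refine ZMod.sq_add_sq_add_sq_ne_zero_of_eq_one (φ x) (φ y) (φ z) ?_ ?_
  · rcases hone with h | h | h <;> simp [h]
  · linear_combination hred

theorem isIsotropic_padic_two_iff {u v : ℤ} (hu : Odd u) (hv : Odd v) :
    IsIsotropic ℚ_[2] u v ↔ u % 4 = 1 ∨ v % 4 = 1 := by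
  refine ⟨fun h => ?_, ?_⟩
  · by_contra! hne
    rw [Int.odd_iff] at hu hv
    exact not_isIsotropic_padic_two_of_emod_four_eq_three (by omega) (by omega) h
  · rintro (h | h)
    · exact isIsotropic_padic_two_of_emod_four_eq_one h hv
    · exact (isIsotropic_padic_two_of_emod_four_eq_one h hu).symm

theorem Int.even_mul_sub_one_div_two_iff {u v : ℤ} (hu : Odd u) (hv : Odd v) :
    Even ((u - 1) / 2 * ((v - 1) / 2)) ↔ u % 4 = 1 ∨ v % 4 = 1 := by
  rw [Int.odd_iff] at hu hv
  rw [Int.even_mul, Int.even_iff, Int.even_iff]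
  omega

open Classical in
/-- For odd integers `u`, `v`, the pair `(u, v)` is isotropic over `ℚ₂` iff
`u ≡ 1 (mod 4)` or `v ≡ 1 (mod 4)`; equivalently, the 2-adic Hilbert symbol
of `u` and `v` equals `(−1)^{((u−1)/2)·((v−1)/2)}`. -/
theorem hilbert_symbol_at_two (u v : ℤ) (hu : Odd u) (hv : Odd v) :
    ((∃ x y z : ℚ_[2], (x, y, z) ≠ (0, 0, 0) ∧
        z ^ 2 = (u : ℚ_[2]) * x ^ 2 + (v : ℚ_[2]) * y ^ 2)
      ↔ (u % 4 = 1 ∨ v % 4 = 1))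
    ∧ ((if (∃ x y z : ℚ_[2], (x, y, z) ≠ (0, 0, 0) ∧
            z ^ 2 = (u : ℚ_[2]) * x ^ 2 + (v : ℚ_[2]) * y ^ 2)
          then (1 : ℚ) else -1)
        = (-1 : ℚ) ^ ((u - 1) / 2 * ((v - 1) / 2))) := by
  have hiff : IsIsotropic ℚ_[2] u v ↔ u % 4 = 1 ∨ v % 4 = 1 := isIsotropic_padic_two_iff hu hv
  refine ⟨hiff, ?_⟩
  rw [neg_one_zpow_eq_ite]
  exact if_congr (hiff.trans (Int.even_mul_sub_one_div_two_iff hu hv).symm) rfl rfl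
end

section
/- Let φ : ℝ → ℂ be a Schwartz function and let a be a nonzero real number. Let φ̂(y) = ∫_ℝ φ(x)·exp(2πi·x·y) dx. Then ∫_ℝ φ̂(x)·exp(2πi·a·x²) dx = exp(iπ·sgn(a)/4) · (2|a|)^{−1/2} · ∫_ℝ φ(x)·exp(−2πi·x²/(4a)) dx, where sgn(a) = 1 if a > 0 and sgn(a) = −1 if a < 0. (Both integrals converge absolutely since φ and φ̂ are Schwartz.) -/
/-!
Replace `e^{2πiax²}` by `e^{-bx²}`. For `0 < Re b`, Fubini and the Fourier transform of the
Gaussian give `∫ φ̂(x) e^{-bx²} dx = (π/b)^{1/2} ∫ φ(t) e^{-π²t²/b} dt`. By dominated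
convergence (`|e^{-cu}| ≤ 1` for `Re c ≥ 0 ≤ u`) both sides are continuous in `b` on the closed
right half-plane minus `0`, so the identity persists at `b = -2πia`, where
`(π/b)^{1/2} = (i/2a)^{1/2} = e^{iπ sgn(a)/4} (2|a|)^{-1/2}`.
-/

open MeasureTheory Complex Real FourierTransform

lemma Real.fourierInv_eq_integral_mul_cexp (f : ℝ → ℂ) (x : ℝ) :
    𝓕⁻ f x = ∫ t : ℝ, f t * cexp (2 * π * I * t * x) := by
  rw [Real.fourierInv_eq']
  congr 1 with t
  rw [smul_eq_mul, mul_comm, RCLike.inner_apply, conj_trivial]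
  push_cast
  ring_nf

lemma integral_fourierInv_mul_cexp_neg_mul_sq {f : ℝ → ℂ} (hf : Integrable f) {b : ℂ}
    (hb : 0 < b.re) :
    ∫ x : ℝ, 𝓕⁻ f x * cexp (-b * x ^ 2)
      = (π / b) ^ (1 / 2 : ℂ) * ∫ t : ℝ, f t * cexp (-(π * t) ^ 2 / b) := by
  have hint : Integrable (Function.uncurry fun (x t : ℝ) =>
      f t * cexp (2 * π * I * t * x) * cexp (-b * x ^ 2)) (volume.prod volume) := by
    refine ((integrable_exp_neg_mul_sq hb).mul_prod hf.norm).mono' ?_ (.of_forall fun p => ?_)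
    · exact (hf.aestronglyMeasurable.comp_snd.mul (by fun_prop)).mul (by fun_prop)
    · simp [Function.uncurry, norm_exp, ← ofReal_pow, mul_comm]
  calc ∫ x : ℝ, 𝓕⁻ f x * cexp (-b * x ^ 2)
      = ∫ x : ℝ, ∫ t : ℝ, f t * cexp (2 * π * I * t * x) * cexp (-b * x ^ 2) := by
        simp_rw [Real.fourierInv_eq_integral_mul_cexp, ← integral_mul_const]
    _ = ∫ t : ℝ, f t * ∫ x : ℝ, cexp (I * (2 * π * t) * x) * cexp (-b * x ^ 2) := by
        rw [integral_integral_swap hint]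
        congr 1 with t
        rw [← integral_const_mul]
        congr 1 with x
        ring_nf
    _ = (π / b) ^ (1 / 2 : ℂ) * ∫ t : ℝ, f t * cexp (-(π * t) ^ 2 / b) := by
        simp_rw [fourierIntegral_gaussian hb, ← integral_const_mul]
        congr 1 with t
        ring_nf

lemma norm_cexp_neg_mul_ofReal_le_one {c : ℂ} {u : ℝ} (hc : 0 ≤ c.re) (hu : 0 ≤ u) :
    ‖cexp (-c * u)‖ ≤ 1 := by
  rw [norm_exp, Real.exp_le_one_iff, neg_mul, neg_re, re_mul_ofReal, neg_nonpos]
  exact mul_nonneg hc hu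

lemma continuousOn_integral_mul_cexp_neg_mul {α : Type*} [MeasurableSpace α] {μ : Measure α}
    {f : α → ℂ} (hf : Integrable f μ) {u : α → ℝ} (hu : Measurable u) (hu0 : ∀ x, 0 ≤ u x) :
    ContinuousOn (fun c : ℂ => ∫ x, f x * cexp (-c * u x) ∂μ) {c | 0 ≤ c.re} := by
  refine continuousOn_of_dominated (bound := fun x => ‖f x‖) (fun c _ => ?_) (fun c hc => ?_)
    hf.norm (.of_forall fun x => by fun_prop)
  · exact hf.aestronglyMeasurable.mul (by fun_prop : Measurable _).aestronglyMeasurable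
  · refine .of_forall fun x => ?_
    rw [norm_mul]
    exact mul_le_of_le_one_right (norm_nonneg _) (norm_cexp_neg_mul_ofReal_le_one hc (hu0 x))

lemma ofReal_div_mem_slitPlane_of_re_nonneg {r : ℝ} (hr : 0 < r) {b : ℂ} (hb : 0 ≤ b.re)
    (hb0 : b ≠ 0) :
    r / b ∈ slitPlane := by
  have hn : 0 < normSq b := normSq_pos.2 hb0
  rw [mem_slitPlane_iff, div_re, div_im, ofReal_re, ofReal_im]
  rcases hb.lt_or_eq with hre | hre
  · left
    simp only [zero_mul, zero_div, add_zero]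
    exact div_pos (mul_pos hr hre) hn
  · right
    have him : b.im ≠ 0 := fun him => hb0 (ext hre.symm him)
    simp [him, hr.ne', hn.ne']

lemma integral_fourierInv_mul_cexp_neg_mul_sq_of_re_nonneg {f : ℝ → ℂ} (hf : Integrable f)
    (hf' : Integrable (𝓕⁻ f)) {b : ℂ} (hb : 0 ≤ b.re) (hb0 : b ≠ 0) :
    ∫ x : ℝ, 𝓕⁻ f x * cexp (-b * x ^ 2)
      = (π / b) ^ (1 / 2 : ℂ) * ∫ t : ℝ, f t * cexp (-(π * t) ^ 2 / b) := by
  set s : Set ℂ := {c | 0 ≤ c.re} \ {0}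
  have hlhs : ContinuousOn (fun c : ℂ => ∫ x : ℝ, 𝓕⁻ f x * cexp (-c * x ^ 2)) s := by
    simpa only [ofReal_pow] using (continuousOn_integral_mul_cexp_neg_mul hf'
      (u := fun x => x ^ 2) (by fun_prop) sq_nonneg).mono Set.sdiff_subset
  have hinv : Set.MapsTo (·⁻¹) s {c : ℂ | 0 ≤ c.re} := fun c hc => by
    simpa [inv_re] using div_nonneg hc.1 (normSq_nonneg c)
  have hrhs : ContinuousOn (fun c : ℂ => ∫ t : ℝ, f t * cexp (-(π * t) ^ 2 / c)) s := by
    have := (continuousOn_integral_mul_cexp_neg_mul hf (u := fun t => (π * t) ^ 2)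
      (by fun_prop) fun t => sq_nonneg _).comp (continuousOn_inv₀.mono fun c hc => hc.2) hinv
    refine this.congr fun c _ => integral_congr_ae (.of_forall fun t => ?_)
    push_cast
    ring_nf
  have hconst : ContinuousOn (fun c : ℂ => (π / c) ^ (1 / 2 : ℂ)) s := fun c hc =>
    ((continuousAt_const.div continuousAt_id hc.2).cpow continuousAt_const
      (ofReal_div_mem_slitPlane_of_re_nonneg pi_pos hc.1 hc.2)).continuousWithinAt
  refine Set.EqOn.of_subset_closure (s := {c : ℂ | 0 < c.re}) (t := s)
    (fun c (hc : 0 < c.re) => integral_fourierInv_mul_cexp_neg_mul_sq hf hc) hlhs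
    (hconst.mul hrhs)
    (fun c (hc : 0 < c.re) => ⟨hc.le, by rintro rfl; simp at hc⟩) (fun c hc => ?_) ⟨hb, hb0⟩
  rw [closure_setOfPred_lt_re]
  exact hc.1

lemma Complex.I_div_two_mul_cpow_half {a : ℝ} (ha : a ≠ 0) :
    (I / (2 * a)) ^ (1 / 2 : ℂ)
      = cexp (I * π * (if 0 < a then (1 : ℂ) else -1) / 4)
        * (((2 * |a|) ^ (-(1 / 2 : ℝ)) : ℝ) : ℂ) := by
  have h2a : 0 < 2 * |a| := by positivity
  rw [Real.rpow_def_of_pos h2a, ofReal_exp, ← Complex.exp_add,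
    cpow_def_of_ne_zero (by simp [ha, I_ne_zero])]
  congr 1
  rcases ha.lt_or_gt with hneg | hpos
  · have : I / (2 * a) = ((2 * |a|)⁻¹ : ℝ) * -I := by
      rw [abs_of_neg hneg]; push_cast; field_simp
    rw [this, log_ofReal_mul (by positivity) (by simp), log_neg_I, Real.log_inv, if_neg hneg.not_gt]
    push_cast
    ring
  · have : I / (2 * a) = ((2 * |a|)⁻¹ : ℝ) * I := by
      rw [abs_of_pos hpos]; push_cast; field_simp
    rw [this, log_ofReal_mul (by positivity) I_ne_zero, log_I, Real.log_inv, if_pos hpos]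
    push_cast
    ring

/-- The defining Fourier identity of the one-dimensional real Weil index:
for a Schwartz function `φ` and `a ≠ 0`,
`∫ φ̂(x)·e^{2πiax²} dx = e^{iπ·sgn(a)/4}·(2|a|)^{−1/2}·∫ φ(x)·e^{−2πix²/(4a)} dx`,
where `φ̂(y) = ∫ φ(x)·e^{2πixy} dx`. -/
theorem weil_index_real_gaussian (φ : SchwartzMap ℝ ℂ) (a : ℝ) (ha : a ≠ 0) :
    (∫ x : ℝ, (∫ t : ℝ, φ t * Complex.exp (2 * Real.pi * Complex.I * t * x)) *
        Complex.exp (2 * Real.pi * Complex.I * a * x ^ 2))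
      = Complex.exp (Complex.I * Real.pi * (if 0 < a then (1 : ℂ) else -1) / 4)
        * (((2 * |a|) ^ (-(1 / 2 : ℝ)) : ℝ) : ℂ)
        * ∫ x : ℝ, φ x *
            Complex.exp (-(2 * Real.pi * Complex.I * x ^ 2) / (4 * a)) := by
  set b : ℂ := -(2 * π * I * a)
  have hb0 : b ≠ 0 := by simp [b, ha, pi_ne_zero, I_ne_zero]
  have hπb : π / b = I / (2 * a) := by
    rw [div_eq_div_iff hb0 (by simp [ha])]
    linear_combination (2 * π * a) * I_sq
  have hφ : Integrable (𝓕⁻ (φ : ℝ → ℂ)) := by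
    rw [← SchwartzMap.fourierInv_coe]
    exact (𝓕⁻ φ).integrable
  have key := integral_fourierInv_mul_cexp_neg_mul_sq_of_re_nonneg φ.integrable hφ
    (b := b) (by simp [b]) hb0
  simp_rw [Real.fourierInv_eq_integral_mul_cexp, hπb, Complex.I_div_two_mul_cpow_half ha] at key
  have hexp (x : ℝ) : -(π * x) ^ 2 / b = -(2 * π * I * x ^ 2) / (4 * a) := by
    rw [div_eq_div_iff hb0 (by simp [ha])]
    linear_combination (-4 * π ^ 2 * a * x ^ 2) * I_sq
  simp_rw [hexp] at key
  convert key using 4 with x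
  simp [b]
end

section
/- Let a₁, …, a_n be nonzero real numbers. Define γ(a) = exp(iπ·sgn(a)/4) for nonzero real a, and h(a,b) = −1 if a < 0 and b < 0, else h(a,b) = 1. Then ∏_{i=1}^n γ(a_i) = γ(1)^{n−1} · γ(a₁⋯a_n) · ∏_{1 ≤ i < j ≤ n} h(a_i, a_j). -/
open Classical in
/-- The real Weil index `γ(a) = exp(iπ·sgn(a)/4)`. -/
noncomputable def gammaReal (a : ℝ) : ℂ :=
  Complex.exp (Complex.I * Real.pi * (if 0 < a then (1 : ℂ) else -1) / 4)

open Classical in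
/-- The real Hilbert symbol: `−1` if both arguments are negative, else `1`. -/
noncomputable def hilbertReal (a b : ℝ) : ℂ :=
  if a < 0 ∧ b < 0 then -1 else 1

lemma gamma_of_pos {a : ℝ} (h : 0 < a) :
    gammaReal a = Complex.exp (Complex.I * Real.pi * 1 / 4) := by
  rw [gammaReal, if_pos h]

lemma gamma_of_neg {a : ℝ} (h : a < 0) :
    gammaReal a = Complex.exp (Complex.I * Real.pi * (-1) / 4) := by
  rw [gammaReal, if_neg (not_lt.2 h.le)]

lemma hilbert_of_neg {x y : ℝ} (hx : x < 0) (hy : y < 0) : hilbertReal x y = -1 := by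
  rw [hilbertReal, if_pos ⟨hx, hy⟩]

lemma hilbert_of_not {x y : ℝ} (h : ¬ (x < 0 ∧ y < 0)) : hilbertReal x y = 1 := by
  rw [hilbertReal, if_neg h]

lemma gamma_mul (x y : ℝ) (hx : x ≠ 0) (hy : y ≠ 0) :
    gammaReal x * gammaReal y = gammaReal 1 * gammaReal (x * y) * hilbertReal x y := by
  rcases hx.lt_or_gt with hx | hx <;> rcases hy.lt_or_gt with hy | hy
  · rw [gamma_of_neg hx, gamma_of_neg hy, gamma_of_pos one_pos,
      gamma_of_pos (mul_pos_of_neg_of_neg hx hy), hilbert_of_neg hx hy]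
    conv_rhs => rw [show (-1 : ℂ) = Complex.exp (↑Real.pi * Complex.I) from
      Complex.exp_pi_mul_I.symm]
    rw [← Complex.exp_add, ← Complex.exp_add, ← Complex.exp_add]
    exact Complex.exp_eq_exp_iff_exists_int.mpr ⟨-1, by push_cast; ring⟩
  · rw [gamma_of_neg hx, gamma_of_pos hy, gamma_of_pos one_pos,
      gamma_of_neg (mul_neg_of_neg_of_pos hx hy),
      hilbert_of_not (fun h => absurd h.2 (not_lt.2 hy.le))]
    simp only [mul_one]
    rw [← Complex.exp_add, ← Complex.exp_add]
    exact congrArg Complex.exp (by ring)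
  · rw [gamma_of_pos hx, gamma_of_neg hy, gamma_of_pos one_pos,
      gamma_of_neg (mul_neg_of_pos_of_neg hx hy),
      hilbert_of_not (fun h => absurd h.1 (not_lt.2 hx.le))]
    simp only [mul_one]
  · rw [gamma_of_pos hx, gamma_of_pos hy, gamma_of_pos one_pos,
      gamma_of_pos (mul_pos hx hy),
      hilbert_of_not (fun h => absurd h.1 (not_lt.2 hx.le))]
    simp only [mul_one]

lemma hilbert_mul (x y b : ℝ) (hx : x ≠ 0) (hy : y ≠ 0) :
    hilbertReal (x * y) b = hilbertReal x b * hilbertReal y b := by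
  by_cases hb : b < 0
  · rcases hx.lt_or_gt with hx | hx <;> rcases hy.lt_or_gt with hy | hy
    · rw [hilbert_of_not (fun h => absurd h.1 (not_lt.2 (mul_pos_of_neg_of_neg hx hy).le)),
        hilbert_of_neg hx hb, hilbert_of_neg hy hb]; norm_num
    · rw [hilbert_of_neg (mul_neg_of_neg_of_pos hx hy) hb, hilbert_of_neg hx hb,
        hilbert_of_not (fun h => absurd h.1 (not_lt.2 hy.le)), mul_one]
    · rw [hilbert_of_neg (mul_neg_of_pos_of_neg hx hy) hb,
        hilbert_of_not (fun h => absurd h.1 (not_lt.2 hx.le)), hilbert_of_neg hy hb, one_mul]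
    · rw [hilbert_of_not (fun h => absurd h.1 (not_lt.2 (mul_pos hx hy).le)),
        hilbert_of_not (fun h => absurd h.1 (not_lt.2 hx.le)),
        hilbert_of_not (fun h => absurd h.1 (not_lt.2 hy.le)), mul_one]
  · rw [hilbert_of_not (fun h => hb h.2), hilbert_of_not (fun h => hb h.2),
      hilbert_of_not (fun h => hb h.2), mul_one]

lemma hilbert_prod {n : ℕ} (f : Fin n → ℝ) (b : ℝ) (hf : ∀ i, f i ≠ 0) :
    hilbertReal (∏ i, f i) b = ∏ i, hilbertReal (f i) b := by
  induction n with
  | zero => norm_num [hilbertReal]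
  | succ n ih =>
      rw [Fin.prod_univ_castSucc (f := f),
        Fin.prod_univ_castSucc (f := fun i => hilbertReal (f i) b),
        hilbert_mul _ _ _ (Finset.prod_ne_zero_iff.2 (fun i _ => hf _)) (hf _),
        ih (fun i => f i.castSucc) (fun i => hf _)]

open Classical in
/-- The Hasse formula for the real Weil index of a diagonal form:
`∏ γ(aᵢ) = γ(1)^{n−1}·γ(a₁⋯a_n)·∏_{i<j} (aᵢ,aⱼ)_∞`. -/
theorem real_hasse_formula (n : ℕ) (hn : 0 < n) (a : Fin n → ℝ)
    (ha : ∀ i, a i ≠ 0) :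
    ∏ i, gammaReal (a i)
      = gammaReal 1 ^ (n - 1) * gammaReal (∏ i, a i)
        * ∏ i, ∏ j, if i < j then hilbertReal (a i) (a j) else 1 := by
  induction n with
  | zero => exact absurd hn (lt_irrefl 0)
  | succ m ih =>
    rcases Nat.eq_zero_or_pos m with rfl | hm
    · have hlt : ∀ i j : Fin 1, ¬ i < j := by decide
      simp [hlt]
    · have hg : ∀ i : Fin m, a i.castSucc ≠ 0 := fun i => ha _
      have key := ih hm (fun i => a i.castSucc) hg
      have hP : (∏ i : Fin m, a i.castSucc) ≠ 0 :=
        Finset.prod_ne_zero_iff.2 (fun i _ => hg i)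
      have pair : (∏ i : Fin (m+1), ∏ j : Fin (m+1),
            if i < j then hilbertReal (a i) (a j) else 1)
          = (∏ i : Fin m, ∏ j : Fin m,
              if i < j then hilbertReal (a i.castSucc) (a j.castSucc) else 1)
            * ∏ i : Fin m, hilbertReal (a i.castSucc) (a (Fin.last m)) := by
        rw [Fin.prod_univ_castSucc]
        have hlast : (∏ j : Fin (m+1),
            if Fin.last m < j then hilbertReal (a (Fin.last m)) (a j) else 1) = 1 :=
          Finset.prod_eq_one (fun j _ => if_neg (not_lt.2 (Fin.le_last j)))
        rw [hlast, mul_one, ← Finset.prod_mul_distrib]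
        refine Finset.prod_congr rfl (fun i _ => ?_)
        rw [Fin.prod_univ_castSucc]
        rw [if_pos (Fin.castSucc_lt_last i)]
        exact congrArg (fun z => z * hilbertReal (a i.castSucc) (a (Fin.last m)))
          (Finset.prod_congr rfl (fun j _ => by simp only [Fin.castSucc_lt_castSucc_iff]))
      rw [Fin.prod_univ_castSucc (f := fun i => gammaReal (a i)), key,
        Fin.prod_univ_castSucc (f := fun i => a i), pair,
        ← hilbert_prod (fun i => a i.castSucc) (a (Fin.last m)) hg,
        show m + 1 - 1 = (m - 1) + 1 from by omega, pow_succ]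
      have hgm := gamma_mul (∏ i : Fin m, a i.castSucc) (a (Fin.last m)) hP (ha _)
      linear_combination (gammaReal 1 ^ (m - 1) *
        ∏ i : Fin m, ∏ j : Fin m,
          if i < j then hilbertReal (a i.castSucc) (a j.castSucc) else 1) * hgm
end

section
/- For a nonzero real number a, define operators on Schwartz functions φ : ℝ → ℂ by (N(t)φ)(x) = exp(iπ·t·x²)·φ(x) for t ∈ ℝ, (Fφ)(y) = ∫_ℝ φ(x)·exp(2πi·x·y) dx, and F^{−1} its inverse. Then for every Schwartz function φ and every x ∈ ℝ: (N(a) ∘ F ∘ N(a^{−1}) ∘ F^{−1} ∘ N(a) ∘ F^{−1}) φ (x) = exp(iπ·sgn(a)/4) · |a|^{1/2} · φ(a·x), where sgn(a) = 1 if a > 0 and −1 if a < 0. -/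
/-!
The middle factor `F ∘ N(a⁻¹) ∘ F⁻¹` is the Fourier multiplier by the chirp
`e^{iπy²/a} = e^{-πby²}`, `b = (ia)⁻¹`. For `Re b > 0` the multiplication formula and the
Fourier transform of the Gaussian make this multiplier a convolution with the heat kernel
`b^{-1/2} e^{-πx²/b}`. Both sides are continuous in `b` on the closed right half-plane minus `0`
(dominated convergence), so the identity survives at `b = (ia)⁻¹`, where the kernel is the chirp
`(ia)^{1/2} e^{-iπax²}`. Convolving it with `e^{iπaξ²}·Fφ(ξ)` gives `e^{-iπax²}·φ(ax)` by
Fourier inversion, the outer `N(a)` removes the phase, and `(ia)^{1/2} = e^{iπ sgn(a)/4}|a|^{1/2}`.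
-/

open MeasureTheory

/-- The quadratic phase operator `N(t)φ(x) = e^{iπtx²}·φ(x)`. -/
noncomputable def Nop (t : ℝ) (φ : ℝ → ℂ) : ℝ → ℂ :=
  fun x => Complex.exp (Real.pi * Complex.I * t * x ^ 2) * φ x

/-- The Fourier transform `Fφ(y) = ∫ φ(x)·e^{2πixy} dx`. -/
noncomputable def Fop (φ : ℝ → ℂ) : ℝ → ℂ :=
  fun y => ∫ x : ℝ, φ x * Complex.exp (2 * Real.pi * Complex.I * x * y)

/-- The inverse Fourier transform `F⁻¹φ(y) = ∫ φ(x)·e^{−2πixy} dx`. -/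
noncomputable def Finv (φ : ℝ → ℂ) : ℝ → ℂ :=
  fun y => ∫ x : ℝ, φ x * Complex.exp (-(2 * Real.pi * Complex.I * x * y))

open Complex Real Filter
open scoped FourierTransform SchwartzMap

theorem iteratedDeriv_cexp_ofReal_mul_I (n : ℕ) :
    iteratedDeriv n (fun s : ℝ => cexp (s * I)) = fun s : ℝ => I ^ n * cexp (s * I) := by
  induction n with
  | zero => simp
  | succ n ih =>
    ext s
    rw [iteratedDeriv_succ, ih]
    have h : HasDerivAt (fun s : ℝ => cexp (s * I)) (cexp (s * I) * I) s :=
      ((hasDerivAt_id s).ofReal_comp.mul_const I).cexp.congr_deriv (by simp)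
    rw [(h.const_mul (I ^ n)).deriv]
    ring

theorem hasTemperateGrowth_cexp_ofReal_mul_I :
    (fun s : ℝ => cexp (s * I)).HasTemperateGrowth := by
  refine ⟨(ofRealCLM.contDiff.mul contDiff_const).cexp, fun n => ⟨0, 1, fun s => ?_⟩⟩
  rw [norm_iteratedFDeriv_eq_norm_iteratedDeriv, iteratedDeriv_cexp_ofReal_mul_I]
  simp [norm_exp_ofReal_mul_I]

theorem hasTemperateGrowth_cexp_mul_sq (t : ℝ) :
    (fun x : ℝ => cexp (π * I * t * x ^ 2)).HasTemperateGrowth := by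
  have h : (fun x : ℝ => cexp (π * I * t * x ^ 2))
      = (fun s : ℝ => cexp (s * I)) ∘ fun x : ℝ => π * t * x ^ 2 := by
    ext x
    simp only [Function.comp_apply]
    congr 1
    push_cast
    ring
  rw [h]
  exact hasTemperateGrowth_cexp_ofReal_mul_I.comp (by fun_prop)

theorem Finv_eq_fourier : Finv = 𝓕 := by
  ext f y
  rw [Real.fourier_real_eq_integral_exp_smul]
  refine integral_congr_ae (Eventually.of_forall fun x => ?_)
  simp only [smul_eq_mul]
  rw [mul_comm]
  congr 2
  push_cast
  ring

theorem Fop_eq_fourierInv : Fop = 𝓕⁻ := by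
  ext f y
  rw [Real.fourierInv_eq']
  refine integral_congr_ae (Eventually.of_forall fun x => ?_)
  simp only [smul_eq_mul, inner_apply]
  rw [mul_comm]
  congr 2
  push_cast
  ring

theorem Nop_eq_smulLeftCLM (t : ℝ) (f : 𝓢(ℝ, ℂ)) :
    Nop t f = SchwartzMap.smulLeftCLM ℂ (fun x : ℝ => cexp (π * I * t * x ^ 2)) f := by
  ext x
  rw [SchwartzMap.smulLeftCLM_apply_apply (hasTemperateGrowth_cexp_mul_sq t), smul_eq_mul, Nop]

theorem Nop_inv_eq_gaussian_mul (a : ℝ) (f : ℝ → ℂ) :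
    Nop a⁻¹ f = fun y : ℝ => cexp (-π * (I * a)⁻¹ * y ^ 2) * f y := by
  ext y
  rw [Nop]
  congr 2
  push_cast
  field_simp
  rw [I_sq]
  ring

theorem Real.integral_fourier_mul_eq {f g : ℝ → ℂ} (hf : Integrable f) (hg : Integrable g) :
    ∫ ξ, 𝓕 f ξ * g ξ = ∫ x, f x * 𝓕 g x := by
  have hflip : VectorFourier.fourierIntegral 𝐞 volume (innerₗ ℝ).flip g = 𝓕 g := by
    ext x
    rw [Real.fourier_eq]
    simp [VectorFourier.fourierIntegral]
  have h := VectorFourier.integral_fourierIntegral_smul_eq_flip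
    (L := innerₗ ℝ) Real.continuous_fourierChar continuous_inner hf hg
  simp only [smul_eq_mul, hflip] at h
  exact h

theorem fourierInv_gaussian_mul_fourier {u : ℝ → ℂ} (hu : Integrable u) {b : ℂ}
    (hb : 0 < b.re) (x : ℝ) :
    𝓕⁻ (fun y : ℝ => cexp (-π * b * y ^ 2) * 𝓕 u y) x
      = 1 / b ^ (1 / 2 : ℂ) * ∫ ξ : ℝ, cexp (-π / b * (x - ξ) ^ 2) * u ξ := by
  set h : ℝ → ℂ := fun y => cexp (-π * b * y ^ 2 + 2 * π * (I * x) * y)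
  have hh : Integrable h := by
    have hπb : 0 < (π * b).re := by simpa using mul_pos pi_pos hb
    simpa [h, neg_mul, mul_assoc] using integrable_cexp_quadratic hπb (2 * π * (I * x)) 0
  calc 𝓕⁻ (fun y : ℝ => cexp (-π * b * y ^ 2) * 𝓕 u y) x
      = ∫ y, 𝓕 u y * h y := by
        rw [Real.fourierInv_eq']
        refine integral_congr_ae (Eventually.of_forall fun y => ?_)
        simp only [h, smul_eq_mul, Complex.exp_add, inner_apply]
        push_cast
        ring_nf
    _ = ∫ ξ, u ξ * 𝓕 h ξ := Real.integral_fourier_mul_eq hu hh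
    _ = ∫ ξ : ℝ, 1 / b ^ (1 / 2 : ℂ) * (cexp (-π / b * (x - ξ) ^ 2) * u ξ) := by
        rw [fourier_gaussian_pi' hb]
        refine integral_congr_ae (Eventually.of_forall fun ξ => ?_)
        have hI : I * (I * (x : ℂ)) = -x := by rw [← mul_assoc, I_mul_I, neg_one_mul]
        simp only [hI, ← sub_eq_add_neg, sub_sq_comm (ξ : ℂ)]
        ring
    _ = _ := integral_const_mul _ _

theorem continuousOn_integral_cexp_neg_mul_mul {α : Type*} [MeasurableSpace α] {μ : Measure α}
    {u : α → ℂ} (hu : Integrable u μ) {q : α → ℝ} (hq : Measurable q) (hq₀ : ∀ ξ, 0 ≤ q ξ) :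
    ContinuousOn (fun w : ℂ => ∫ ξ, cexp (-(w * q ξ)) * u ξ ∂μ) {w | 0 ≤ w.re} := by
  refine continuousOn_of_dominated (bound := fun ξ => ‖u ξ‖) (fun w _ => ?_) (fun w hw => ?_)
    hu.norm (Eventually.of_forall fun ξ => by fun_prop)
  · exact ((measurable_ofReal.comp hq).const_mul w).neg.cexp.aestronglyMeasurable.mul hu.1
  · refine Eventually.of_forall fun ξ => ?_
    rw [norm_mul, Complex.norm_exp]
    refine mul_le_of_le_one_left (norm_nonneg _) (Real.exp_le_one_iff.2 ?_)
    simpa [re_mul_ofReal] using mul_nonneg hw (hq₀ ξ)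

theorem fourierInv_gaussian_mul_fourier_of_re_nonneg {u : ℝ → ℂ} (hu : Integrable u)
    (hFu : Integrable (𝓕 u)) {b : ℂ} (hb : 0 ≤ b.re) (hb₀ : b ≠ 0) (x : ℝ) :
    𝓕⁻ (fun y : ℝ => cexp (-π * b * y ^ 2) * 𝓕 u y) x
      = 1 / b ^ (1 / 2 : ℂ) * ∫ ξ : ℝ, cexp (-π / b * (x - ξ) ^ 2) * u ξ := by
  have hslit : {w : ℂ | 0 ≤ w.re} \ {0} ⊆ slitPlane := fun w ⟨hw, hw₀⟩ =>
    mem_slitPlane_iff.2 <| (eq_or_lt_of_le hw).elim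
      (fun h => Or.inr fun him => hw₀ (Complex.ext h.symm him)) Or.inl
  have hL : ContinuousOn (fun b : ℂ => 𝓕⁻ (fun y : ℝ => cexp (-π * b * y ^ 2) * 𝓕 u y) x)
      {w | 0 ≤ w.re} := by
    have hg : Integrable (fun y : ℝ => 𝐞 (inner ℝ y x) • 𝓕 u y) := by
      simpa using (Real.fourierIntegral_convergent_iff (-x)).2 hFu
    refine ((continuousOn_integral_cexp_neg_mul_mul hg (q := fun y => y ^ 2) (by fun_prop)
      (fun y => sq_nonneg y)).comp (continuous_const_mul (π : ℂ)).continuousOn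
      (fun w hw => ?_)).congr (fun w _ => ?_)
    · simpa using mul_nonneg pi_pos.le hw
    · rw [Real.fourierInv_eq]
      refine integral_congr_ae (Eventually.of_forall fun y => ?_)
      simp only [Circle.smul_def, smul_eq_mul, neg_mul, ofReal_pow]
      ring
  have hR : ContinuousOn
      (fun b : ℂ => 1 / b ^ (1 / 2 : ℂ) * ∫ ξ : ℝ, cexp (-π / b * (x - ξ) ^ 2) * u ξ)
      ({w : ℂ | 0 ≤ w.re} \ {0}) := by
    have hdiv : ContinuousOn (fun w : ℂ => (π : ℂ) / w) ({w : ℂ | 0 ≤ w.re} \ {0}) :=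
      continuousOn_const.div continuousOn_id fun w hw => hw.2
    refine ContinuousOn.mul ?_ (((continuousOn_integral_cexp_neg_mul_mul hu
      (q := fun ξ => (x - ξ) ^ 2) (by fun_prop) (fun ξ => sq_nonneg _)).comp hdiv
      (fun w hw => ?_)).congr (fun w _ => ?_))
    · exact continuousOn_const.div (continuousOn_id.cpow_const hslit) fun w hw =>
        (cpow_ne_zero_iff_of_exponent_ne_zero (by norm_num)).2 hw.2
    · change 0 ≤ (π / w).re
      rw [div_re]
      simp only [ofReal_re, ofReal_im, zero_mul, zero_div, add_zero]
      exact div_nonneg (mul_nonneg pi_pos.le hw.1) (normSq_nonneg w)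
    · refine integral_congr_ae (Eventually.of_forall fun ξ => ?_)
      push_cast
      rw [neg_div, neg_mul]
  refine Set.EqOn.of_subset_closure (s := {w : ℂ | 0 < w.re})
    (fun w hw => fourierInv_gaussian_mul_fourier hu hw x) (hL.mono Set.sdiff_subset) hR
    (fun w (hw : 0 < w.re) => ⟨hw.le, fun h : w = 0 => by simp [h] at hw⟩) ?_ ⟨hb, hb₀⟩
  rw [closure_setOfPred_lt_re]
  exact Set.sdiff_subset

theorem cpow_one_half_eq_cexp_mul_sqrt_norm {z : ℂ} (hz : z ≠ 0) :
    z ^ (1 / 2 : ℂ) = cexp (arg z * I / 2) * √‖z‖ := by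
  rw [cpow_def_of_ne_zero hz, Real.sqrt_eq_rpow, Real.rpow_def_of_pos (norm_pos_iff.2 hz),
    ofReal_exp, ← Complex.exp_add, Complex.log]
  congr 1
  push_cast
  ring

theorem I_mul_ofReal_cpow_one_half {a : ℝ} (ha : a ≠ 0) :
    (I * a) ^ (1 / 2 : ℂ) = cexp (I * π * (if 0 < a then (1 : ℂ) else -1) / 4) * √|a| := by
  have harg : arg (I * a) = (if 0 < a then 1 else -1) * (π / 2) := by
    rcases ha.lt_or_gt with h | h
    · rw [show I * a = ((-a : ℝ) : ℂ) * -I by push_cast; ring, arg_real_mul _ (neg_pos.2 h),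
        arg_neg_I, if_neg h.not_gt]
      ring
    · rw [mul_comm, arg_real_mul _ h, arg_I, if_pos h, one_mul]
  rw [cpow_one_half_eq_cexp_mul_sqrt_norm (mul_ne_zero I_ne_zero (ofReal_ne_zero.2 ha)), harg]
  simp only [norm_mul, norm_I, norm_real, Real.norm_eq_abs, one_mul]
  congr 2
  split_ifs <;> push_cast <;> ring

theorem integral_cexp_mul_sub_sq_mul_cexp_mul_sq (a x : ℝ) (v : ℝ → ℂ) :
    ∫ ξ : ℝ, cexp (-π * (I * a) * (x - ξ) ^ 2) * (cexp (π * I * a * ξ ^ 2) * v ξ)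
      = cexp (-(π * I * a * x ^ 2)) * 𝓕⁻ v (a * x) := by
  rw [Real.fourierInv_eq', ← integral_const_mul]
  refine integral_congr_ae (Eventually.of_forall fun ξ => ?_)
  simp only [smul_eq_mul, inner_apply, ← mul_assoc, ← Complex.exp_add]
  congr 2
  push_cast
  ring

/-- The real Bruhat-word identity: for `a ≠ 0` and Schwartz `φ`,
`(N(a) ∘ F ∘ N(a⁻¹) ∘ F⁻¹ ∘ N(a) ∘ F⁻¹)φ(x) = e^{iπ·sgn(a)/4}·|a|^{1/2}·φ(ax)`. -/
theorem real_bruhat_word (a : ℝ) (ha : a ≠ 0) (φ : SchwartzMap ℝ ℂ) (x : ℝ) :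
    Nop a (Fop (Nop a⁻¹ (Finv (Nop a (Finv φ))))) x
      = Complex.exp (Complex.I * Real.pi * (if 0 < a then (1 : ℂ) else -1) / 4)
        * (Real.sqrt |a| : ℂ) * φ (a * x) := by
  set u : 𝓢(ℝ, ℂ) := SchwartzMap.smulLeftCLM ℂ (fun y : ℝ => cexp (π * I * a * y ^ 2)) (𝓕 φ)
  have hu : Nop a (Finv φ) = u := by
    rw [Finv_eq_fourier, ← SchwartzMap.fourier_coe, Nop_eq_smulLeftCLM]
  have hb : 0 ≤ ((I * a)⁻¹ : ℂ).re := by simp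
  have hb₀ : ((I * a)⁻¹ : ℂ) ≠ 0 := by simp [ha]
  rw [hu, Finv_eq_fourier, Fop_eq_fourierInv, Nop_inv_eq_gaussian_mul, Nop,
    fourierInv_gaussian_mul_fourier_of_re_nonneg u.integrable (𝓕 u).integrable hb hb₀]
  have harg : arg (I * a) ≠ π := by simp [arg_eq_pi_iff]
  have hinv : 𝓕⁻ (𝓕 (φ : ℝ → ℂ)) = φ :=
    φ.continuous.fourierInv_fourier_eq φ.integrable (𝓕 φ).integrable
  simp only [u, SchwartzMap.smulLeftCLM_apply_apply (hasTemperateGrowth_cexp_mul_sq a),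
    smul_eq_mul]
  rw [inv_cpow _ _ harg, one_div, inv_inv, div_inv_eq_mul,
    integral_cexp_mul_sub_sq_mul_cexp_mul_sq, SchwartzMap.fourier_coe, hinv,
    I_mul_ofReal_cpow_one_half ha, Complex.exp_neg]
  field_simp
end
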